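/- arXiv:1309.7028 — 5 statements merged into one kernel-verified Lean document; each statement's English description precedes it below -/
import Mathlib

section
/- For s > 0, k ≥ 0, and 0 < |α| < 1 with k+2−s ≠ 0, the Laplace coefficients satisfy the three-term recurrence b_{s,k+2}(α) = ((k+1)/(k+2−s)) (α + 1/α) b_{s,k+1}(α) − ((k+s)/(k+2−s)) b_{s,k}(α). -/
/-!
Write `D t = 1 + α² - 2α cos t`, which is positive when `|α| ≠ 1`. For an integer `n` the function
`sin (n t) · D(t)^(1-s)` vanishes at `0` and `2π`, so its derivative integrates to zero over a period.
Expanding `cos (n t) · D t` and `sin (n t) · sin t` into cosines of `(n ± 1) t` writes that derivative as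
a combination of the integrands of `b_{s,n-1}`, `b_{s,n}`, `b_{s,n+1}`, which gives
`n (1 + α²) b_{s,n} = α (n + 1 - s) b_{s,n+1} + α (n - 1 + s) b_{s,n-1}`; take `n = k + 1`.
-/

noncomputable def laplaceCoeff (s : ℝ) (k : ℤ) (α : ℝ) : ℝ :=
  (1 / (2 * Real.pi)) * ∫ t in (0:ℝ)..(2 * Real.pi),
    Real.cos (k * t) / (1 + α ^ 2 - 2 * α * Real.cos t) ^ s

open Real intervalIntegral

noncomputable def laplaceDenom (α t : ℝ) : ℝ := 1 + α ^ 2 - 2 * α * cos t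

lemma continuous_laplaceDenom (α : ℝ) : Continuous (laplaceDenom α) := by
  unfold laplaceDenom
  fun_prop

lemma hasDerivAt_laplaceDenom (α t : ℝ) :
    HasDerivAt (laplaceDenom α) (2 * α * sin t) t := by
  have h := ((hasDerivAt_cos t).const_mul (2 * α)).const_sub (1 + α ^ 2)
  exact h.congr_deriv (by ring)

section

variable {α : ℝ}

lemma laplaceDenom_pos (hα : |α| ≠ 1) (t : ℝ) : 0 < laplaceDenom α t := by
  have hcos : α * cos t ≤ |α| := by
    calc α * cos t ≤ |α * cos t| := le_abs_self _
      _ = |α| * |cos t| := abs_mul _ _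
      _ ≤ |α| := mul_le_of_le_one_right (abs_nonneg _) (abs_cos_le_one t)
  have hsq : 0 < (1 - |α|) ^ 2 := by
    have := sub_ne_zero.mpr hα.symm
    positivity
  rw [laplaceDenom]
  nlinarith [sq_abs α]

lemma continuous_cos_mul_div_laplaceDenom_rpow (hα : |α| ≠ 1) (s m : ℝ) :
    Continuous fun t => cos (m * t) / laplaceDenom α t ^ s := by
  have hD := laplaceDenom_pos hα
  exact (continuous_cos.comp (continuous_const_mul m)).div
    ((continuous_laplaceDenom α).rpow_const fun t => Or.inl (hD t).ne')
    fun t => (rpow_pos_of_pos (hD t) s).ne'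

lemma hasDerivAt_sin_mul_laplaceDenom_rpow (hα : |α| ≠ 1) (s n t : ℝ) :
    HasDerivAt (fun t => sin (n * t) * laplaceDenom α t ^ (1 - s))
      (n * (1 + α ^ 2) * (cos (n * t) / laplaceDenom α t ^ s)
        - α * (n + 1 - s) * (cos ((n + 1) * t) / laplaceDenom α t ^ s)
        - α * (n - 1 + s) * (cos ((n - 1) * t) / laplaceDenom α t ^ s)) t := by
  have hD := laplaceDenom_pos hα t
  have hsin : HasDerivAt (fun t => sin (n * t)) (cos (n * t) * n) t := by
    simpa using ((hasDerivAt_id t).const_mul n).sin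
  have hpow := (hasDerivAt_laplaceDenom α t).rpow_const (p := 1 - s) (Or.inl hD.ne')
  refine (hsin.mul hpow).congr_deriv ?_
  have hsplit : laplaceDenom α t ^ (1 - s) = laplaceDenom α t / laplaceDenom α t ^ s := by
    rw [rpow_sub hD, rpow_one]
  have hneg : laplaceDenom α t ^ (1 - s - 1) = 1 / laplaceDenom α t ^ s := by
    rw [sub_sub_cancel_left, rpow_neg hD.le, one_div]
  rw [hsplit, hneg, add_mul, sub_mul, cos_add, cos_sub, laplaceDenom]
  field_simp
  ring

lemma laplaceCoeff_three_term (hα : |α| ≠ 1) (s : ℝ) (n : ℤ) :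
    n * (1 + α ^ 2) * laplaceCoeff s n α - α * (n + 1 - s) * laplaceCoeff s (n + 1) α
      - α * (n - 1 + s) * laplaceCoeff s (n - 1) α = 0 := by
  have hint : ∀ m : ℝ, IntervalIntegrable (fun t => cos (m * t) / laplaceDenom α t ^ s)
      MeasureTheory.volume 0 (2 * π) := fun m =>
    (continuous_cos_mul_div_laplaceDenom_rpow hα s m).intervalIntegrable _ _
  have hderiv := fun t (_ : t ∈ Set.uIcc 0 (2 * π)) =>
    hasDerivAt_sin_mul_laplaceDenom_rpow hα s n t
  have hFTC := integral_eq_sub_of_hasDerivAt hderiv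
    ((((hint _).const_mul _).sub ((hint _).const_mul _)).sub ((hint _).const_mul _))
  have hsin : sin (n * (2 * π)) = 0 := by
    rw [show (n : ℝ) * (2 * π) = ((2 * n : ℤ) : ℝ) * π by push_cast; ring, sin_int_mul_pi]
  rw [integral_sub (((hint _).const_mul _).sub ((hint _).const_mul _)) ((hint _).const_mul _),
    integral_sub ((hint _).const_mul _) ((hint _).const_mul _), integral_const_mul,
    integral_const_mul, integral_const_mul, hsin] at hFTC
  simp only [laplaceCoeff, Int.cast_add, Int.cast_sub, Int.cast_one]
  unfold laplaceDenom at hFTC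
  simp only [zero_mul, mul_zero, sin_zero, sub_zero] at hFTC
  linear_combination (1 / (2 * π)) * hFTC

end

theorem stmt_5_general (s : ℝ) (k : ℕ) (α : ℝ) (h0 : 0 < |α|) (h1 : |α| < 1)
    (hk : (k : ℝ) + 2 - s ≠ 0) :
    laplaceCoeff s ((k : ℤ) + 2) α
      = (((k : ℝ) + 1) / ((k : ℝ) + 2 - s)) * (α + 1 / α) * laplaceCoeff s ((k : ℤ) + 1) α
        - (((k : ℝ) + s) / ((k : ℝ) + 2 - s)) * laplaceCoeff s (k : ℤ) α := by
  have hα : α ≠ 0 := abs_pos.mp h0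
  have h := laplaceCoeff_three_term h1.ne s ((k : ℤ) + 1)
  rw [add_assoc, show (1 : ℤ) + 1 = 2 by norm_num, add_sub_cancel_right] at h
  push_cast at h
  field_simp
  linear_combination -h

theorem stmt_5 (s : ℝ) (hs : 0 < s) (k : ℕ) (α : ℝ) (h0 : 0 < |α|) (h1 : |α| < 1)
    (hk : (k : ℝ) + 2 - s ≠ 0) :
    laplaceCoeff s ((k : ℤ) + 2) α
      = (((k : ℝ) + 1) / ((k : ℝ) + 2 - s)) * (α + 1 / α) * laplaceCoeff s ((k : ℤ) + 1) α
        - (((k : ℝ) + s) / ((k : ℝ) + 2 - s)) * laplaceCoeff s (k : ℤ) α :=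
  stmt_5_general s k α h0 h1 hk
end

section
/- (Quantitative implicit/inverse function theorem for zeros) Let F = f + g be a C¹ map on the closed complex polydisk/ball D_R(0) ⊂ ℂⁿ with values in ℂⁿ, where (i) f is a diffeomorphism of D_R(0) with f(0)=0 and everywhere invertible Jacobian ∂f; (ii) sup_{D_R(0)} ‖∂g‖ · sup_{D_R(0)} ‖(∂f)^{−1}‖ ≤ 1/2; (iii) (sup_{D_R(0)} |g| · sup_{D_R(0)} ‖(∂f)^{−1}‖)/r ≤ 1/2 for some 0 < r ≤ R. Then there exists a unique z₀ in the ball B_r(0) with F(z₀) = 0. -/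
/-!
Invert `f` quantitatively and apply Banach's fixed point theorem. Fix `K ∈ (N, 2N)`. Since
`‖(Df)⁻¹‖ ≤ N` and `Df` is uniformly continuous on a compact ball, `f` is locally solvable with a
uniform radius `δ`: every `w` with `K‖w - f z‖ ≤ δ` equals `f z'` for some `z'` with
`‖z' - z‖ ≤ K‖w - f z‖`. Walking from `f 0 = 0` to `w` in steps of length at most `δ / K` inverts
`f` on the ball of radius `σ = r / (2N)`, and injectivity of `f` makes this inverse `Φ`
`K`-Lipschitz. The zeros of `f + g` in the ball of radius `r` are then exactly the fixed points of
`Φ ∘ (-g)`, which maps the closed ball of radius `Kσ < r` into itself and contracts with ratio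
`K / (2N) < 1`.
-/

open Metric Set
open scoped NNReal

theorem exists_nat_pos_div_le {a η : ℝ} (ha : 0 ≤ a) (hη : 0 < η) :
    ∃ M : ℕ, 0 < M ∧ a / M ≤ η := by
  obtain ⟨M, hM⟩ := exists_nat_gt (a / η)
  have hM₀ : (0 : ℝ) < M := (div_nonneg ha hη.le).trans_lt hM
  refine ⟨M, by exact_mod_cast hM₀, ?_⟩
  rw [div_lt_iff₀ hη] at hM
  rw [div_le_iff₀ hM₀]
  linarith

theorem existsUnique_isFixedPt_of_lipschitzOnWith {α : Type*} [MetricSpace α] {T : α → α}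
    {s : Set α} {q : ℝ≥0} (hq : q < 1) (hs : IsComplete s) (hne : s.Nonempty)
    (hT : MapsTo T s s) (hlip : LipschitzOnWith q T s) : ∃! x, x ∈ s ∧ Function.IsFixedPt T x := by
  obtain ⟨x₀, hx₀⟩ := hne
  obtain ⟨x, hx, hTx, -⟩ :=
    ContractingWith.exists_fixedPoint' hs hT ⟨hq, hlip.mapsToRestrict hT⟩ hx₀ (edist_ne_top _ _)
  refine ⟨x, ⟨hx, hTx⟩, fun y ⟨hy, hTy⟩ ↦ dist_le_zero.mp ?_⟩
  have hxy := hlip.dist_le_mul y hy x hx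
  rw [hTx.eq, hTy.eq] at hxy
  nlinarith [dist_nonneg (x := y) (y := x), NNReal.coe_lt_coe.mpr hq]

theorem add_eq_zero_iff_of_rightInverse {E F : Type*} [AddGroup F] {f g : E → F} {Φ : F → E}
    {s : Set E} {t : Set F} (hfΦ : ∀ w ∈ t, f (Φ w) = w) (hΦ : MapsTo Φ t s) (hinj : InjOn f s)
    {z : E} (hz : z ∈ s) (hgz : -g z ∈ t) : f z + g z = 0 ↔ Φ (-g z) = z := by
  rw [add_eq_zero_iff_eq_neg]
  constructor
  · intro h
    exact hinj (hΦ hgz) hz (by rw [hfΦ _ hgz, h])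
  · intro h
    calc f z = f (Φ (-g z)) := by rw [h]
      _ = -g z := hfΦ _ hgz

section

variable {E F : Type*} [NormedAddCommGroup E] [NormedAddCommGroup F]

theorem norm_natCast_succ_div_smul_sub [NormedSpace ℝ E] (v : E) (k M : ℕ) :
    ‖((k + 1 : ℕ) / M : ℝ) • v - (k / M : ℝ) • v‖ = ‖v‖ / M := by
  rw [← sub_smul, norm_smul, Real.norm_eq_abs]
  push_cast
  rw [show ((k : ℝ) + 1) / M - k / M = 1 / M by ring, abs_of_nonneg (by positivity)]
  ring

theorem Convex.lipschitzOnWith_of_local [NormedSpace ℝ E] {s : Set E} (hs : Convex ℝ s)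
    {Φ : E → F} {C η : ℝ} (hη : 0 < η)
    (h : ∀ x ∈ s, ∀ y ∈ s, ‖y - x‖ ≤ η → ‖Φ y - Φ x‖ ≤ C * ‖y - x‖) :
    LipschitzOnWith (Real.toNNReal C) Φ s := by
  refine LipschitzOnWith.of_dist_le' fun y hy x hx ↦ ?_
  rw [dist_eq_norm, dist_eq_norm]
  obtain ⟨M, hM, hMη⟩ := exists_nat_pos_div_le (norm_nonneg (y - x)) hη
  have hM' : (M : ℝ) ≠ 0 := by positivity
  set p : ℕ → E := fun k ↦ x + (k / M : ℝ) • (y - x)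
  have hp : ∀ k ≤ M, p k ∈ s := fun k hk ↦ hs.add_smul_sub_mem hx hy
    ⟨by positivity, div_le_one_of_le₀ (by exact_mod_cast hk) (by positivity)⟩
  have hstep : ∀ k, ‖p (k + 1) - p k‖ = ‖y - x‖ / M := fun k ↦ by
    rw [add_sub_add_left_eq_sub, norm_natCast_succ_div_smul_sub]
  calc ‖Φ y - Φ x‖ = ‖∑ k ∈ Finset.range M, (Φ (p (k + 1)) - Φ (p k))‖ := by
        rw [Finset.sum_range_sub (fun k ↦ Φ (p k))]; simp [p, hM']
    _ ≤ ∑ k ∈ Finset.range M, C * (‖y - x‖ / M) := by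
        refine (norm_sum_le _ _).trans (Finset.sum_le_sum fun k hk ↦ ?_)
        have hk := Finset.mem_range.mp hk
        rw [← hstep k]
        exact h _ (hp k hk.le) _ (hp (k + 1) hk) (hstep k ▸ hMη)
    _ = C * ‖y - x‖ := by
        simp only [Finset.sum_const, Finset.card_range, nsmul_eq_mul]; field_simp

def IsLocallySolvableOn (f : E → F) (s : Set E) (K δ : ℝ) : Prop :=
  ∀ z ∈ s, ∀ w, K * ‖w - f z‖ ≤ δ → ∃ z', ‖z' - z‖ ≤ K * ‖w - f z‖ ∧ f z' = w

theorem IsLocallySolvableOn.exists_norm_le [NormedSpace ℝ F] {f : E → F} {ρ K δ : ℝ}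
    (hf : IsLocallySolvableOn f (closedBall 0 ρ) K δ) (hK : 0 ≤ K) (hδ : 0 < δ) (hf0 : f 0 = 0)
    {w : F} (hw : K * ‖w‖ ≤ ρ) : ∃ z, ‖z‖ ≤ K * ‖w‖ ∧ f z = w := by
  obtain ⟨M, hM, hMδ⟩ := exists_nat_pos_div_le (mul_nonneg hK (norm_nonneg w)) hδ
  have hM' : (M : ℝ) ≠ 0 := by positivity
  suffices ∀ k ≤ M, ∃ z, ‖z‖ ≤ k / M * (K * ‖w‖) ∧ f z = (k / M : ℝ) • w by
    simpa [hM'] using this M le_rfl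
  intro k
  induction k with
  | zero => exact fun _ ↦ ⟨0, by simp, by simp [hf0]⟩
  | succ k ih =>
    intro hk
    obtain ⟨z, hz, hfz⟩ := ih (by omega)
    have hkM : (k / M : ℝ) ≤ 1 :=
      div_le_one_of_le₀ (by exact_mod_cast (by omega : k ≤ M)) (by positivity)
    have hstep : K * ‖((k + 1 : ℕ) / M : ℝ) • w - f z‖ = K * ‖w‖ / M := by
      rw [hfz, norm_natCast_succ_div_smul_sub, mul_div_assoc]
    have hzρ : z ∈ closedBall 0 ρ := mem_closedBall_zero_iff.mpr <|
      hz.trans ((mul_le_of_le_one_left (by positivity) hkM).trans hw)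
    obtain ⟨z', hz', hfz'⟩ := hf z hzρ _ (hstep ▸ hMδ)
    refine ⟨z', ?_, hfz'⟩
    calc ‖z'‖ ≤ ‖z‖ + ‖z' - z‖ := norm_le_insert' z' z
      _ ≤ k / M * (K * ‖w‖) + K * ‖w‖ / M := add_le_add hz (hstep ▸ hz')
      _ = _ := by push_cast; ring

theorem IsLocallySolvableOn.norm_sub_le_of_injOn {f : E → F} {s t : Set E} {K δ : ℝ}
    (hf : IsLocallySolvableOn f s K δ) (hinj : InjOn f t) (hst : ∀ z ∈ s, closedBall z δ ⊆ t)
    {z₁ z₂ : E} (hz₁ : z₁ ∈ s) (hz₂ : z₂ ∈ t) (h : K * ‖f z₂ - f z₁‖ ≤ δ) :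
    ‖z₂ - z₁‖ ≤ K * ‖f z₂ - f z₁‖ := by
  obtain ⟨z', hz', hfz'⟩ := hf z₁ hz₁ (f z₂) h
  have : z' ∈ t := hst z₁ hz₁ (mem_closedBall_iff_norm.mpr (hz'.trans h))
  exact hinj this hz₂ hfz' ▸ hz'

theorem IsLocallySolvableOn.exists_lipschitzOnWith_rightInverse [NormedSpace ℝ F] {f : E → F}
    {σ K δ : ℝ} (hf : IsLocallySolvableOn f (closedBall 0 (K * σ)) K δ) (hK : 0 < K) (hδ : 0 < δ)
    (hf0 : f 0 = 0) (hinj : InjOn f (closedBall 0 (K * σ + δ))) :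
    ∃ Φ : F → E, (∀ w ∈ closedBall 0 σ, f (Φ w) = w) ∧
      MapsTo Φ (closedBall 0 σ) (closedBall 0 (K * σ)) ∧
      LipschitzOnWith (Real.toNNReal K) Φ (closedBall 0 σ) := by
  have hsol : ∀ w ∈ closedBall (0 : F) σ, ∃ z ∈ closedBall (0 : E) (K * σ), f z = w := by
    intro w hw
    have hKw : K * ‖w‖ ≤ K * σ := by gcongr; exact mem_closedBall_zero_iff.mp hw
    obtain ⟨z, hz, hfz⟩ := hf.exists_norm_le hK.le hδ hf0 hKw
    exact ⟨z, mem_closedBall_zero_iff.mpr (hz.trans hKw), hfz⟩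
  choose! Φ hΦ hfΦ using hsol
  have hδball : ∀ z ∈ closedBall (0 : E) (K * σ), closedBall z δ ⊆ closedBall 0 (K * σ + δ) :=
    fun z hz ↦ closedBall_subset_closedBall' (by rw [add_comm]; gcongr; exact hz)
  refine ⟨Φ, hfΦ, hΦ, (convex_closedBall 0 σ).lipschitzOnWith_of_local (div_pos hδ hK)
    fun x hx y hy hxy ↦ ?_⟩
  rw [le_div_iff₀' hK] at hxy
  have hy' : Φ y ∈ closedBall 0 (K * σ + δ) := hδball _ (hΦ y hy) (mem_closedBall_self hδ.le)
  have := hf.norm_sub_le_of_injOn hinj hδball (hΦ x hx) hy' (by rwa [hfΦ y hy, hfΦ x hx])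
  rwa [hfΦ y hy, hfΦ x hx] at this

variable {𝕜 : Type*} [RCLike 𝕜] [NormedSpace 𝕜 E] [NormedSpace 𝕜 F]

theorem surjOn_closedBall_of_norm_fderiv_sub_le [NormedSpace ℝ E] [CompleteSpace E] {f : E → F}
    {J : E ≃L[𝕜] F} {z : E} {s c N : ℝ} (hf : ∀ u ∈ closedBall z s, DifferentiableAt 𝕜 f u)
    (hf' : ∀ u ∈ closedBall z s, ‖fderiv 𝕜 f u - J‖ ≤ c) (hc : 0 ≤ c)
    (hJ : ‖(J.symm : F →L[𝕜] E)‖ ≤ N) (hs : 0 ≤ s) :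
    SurjOn f (closedBall z s) (closedBall (f z) ((N⁻¹ - c) * s)) := by
  rcases J.subsingleton_or_norm_symm_pos with hE | hJ₀
  · have := J.symm.toEquiv.subsingleton
    exact fun w _ ↦ ⟨z, mem_closedBall_self hs, Subsingleton.elim _ _⟩
  have happrox : ApproximatesLinearOn f (J : E →L[𝕜] F) (closedBall z s) ⟨c, hc⟩ :=
    fun x hx y hy ↦ (convex_closedBall z s).norm_image_sub_le_of_norm_hasFDerivWithin_le'
      (fun u hu ↦ (hf u hu).hasFDerivAt.hasFDerivWithinAt) hf' hy hx
  refine (happrox.surjOn_closedBall_of_nonlinearRightInverse J.toNonlinearRightInverse hs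
    subset_rfl).mono subset_rfl (closedBall_subset_closedBall ?_)
  exact mul_le_mul_of_nonneg_right (sub_le_sub_right (inv_anti₀ hJ₀ hJ) c) hs

theorem isLocallySolvableOn_of_norm_fderiv_symm_le [NormedSpace ℝ E] [ProperSpace E] {f : E → F}
    {R ρ N K : ℝ} (hρR : ρ < R) (hf : ContDiffOn 𝕜 1 f (ball 0 R))
    (hJ : ∀ z ∈ ball (0 : E) R, ∃ J : E ≃L[𝕜] F,
      (J : E →L[𝕜] F) = fderiv 𝕜 f z ∧ ‖(J.symm : F →L[𝕜] E)‖ ≤ N)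
    (hN : 0 < N) (hNK : N < K) :
    ∃ δ > 0, ρ + δ ≤ R ∧ IsLocallySolvableOn f (closedBall 0 ρ) K δ := by
  obtain ⟨ρ', hρρ', hρ'R⟩ := exists_between hρR
  have hρ' : closedBall (0 : E) ρ' ⊆ ball 0 R := closedBall_subset_ball hρ'R
  have hc : 0 < N⁻¹ - K⁻¹ := sub_pos.mpr (inv_strictAnti₀ hN hNK)
  obtain ⟨δ₁, hδ₁, hDf⟩ := Metric.uniformContinuousOn_iff.mp
    ((isCompact_closedBall 0 ρ').uniformContinuousOn_of_continuous
      ((hf.continuousOn_fderiv_of_isOpen isOpen_ball le_rfl).mono hρ')) _ hc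
  set δ := min (δ₁ / 2) (ρ' - ρ)
  have hδ : 0 < δ := lt_min (by linarith) (by linarith)
  refine ⟨δ, hδ, by linarith [min_le_right (δ₁ / 2) (ρ' - ρ)], fun z hz w hw ↦ ?_⟩
  set s := K * ‖w - f z‖
  have hs : 0 ≤ s := mul_nonneg (hN.trans hNK).le (norm_nonneg _)
  have hsub : closedBall z s ⊆ closedBall 0 ρ' := closedBall_subset_closedBall' <| by
    rw [dist_zero_right]
    linarith [mem_closedBall_zero_iff.mp hz, min_le_right (δ₁ / 2) (ρ' - ρ)]
  have hz' : z ∈ closedBall 0 ρ' := hsub (mem_closedBall_self hs)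
  obtain ⟨J, hJf, hJN⟩ := hJ z (hρ' hz')
  have hsurj := surjOn_closedBall_of_norm_fderiv_sub_le (J := J) (s := s)
    (fun u hu ↦ (hf.differentiableOn one_ne_zero u (hρ' (hsub hu))).differentiableAt
      (isOpen_ball.mem_nhds (hρ' (hsub hu))))
    (fun u hu ↦ by
      rw [hJf, ← dist_eq_norm]
      refine (hDf u (hsub hu) z hz' ?_).le
      linarith [mem_closedBall.mp hu, min_le_left (δ₁ / 2) (ρ' - ρ)])
    hc.le hJN hs
  obtain ⟨z', hz's, hfz'⟩ := hsurj <| by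
    rw [sub_sub_cancel, inv_mul_cancel_left₀ (hN.trans hNK).ne']
    exact mem_closedBall_iff_norm.mpr le_rfl
  exact ⟨z', mem_closedBall_iff_norm.mp hz's, hfz'⟩

theorem lipschitzOnWith_closedBall_of_norm_fderiv_le [NormedSpace ℝ E] {g : E → F} {R ρ C : ℝ}
    (hg : ContDiffOn 𝕜 1 g (ball 0 R)) (hρR : ρ < R)
    (hC : ∀ z ∈ closedBall (0 : E) ρ, ‖fderiv 𝕜 g z‖ ≤ C) :
    LipschitzOnWith (Real.toNNReal C) g (closedBall 0 ρ) := by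
  refine (convex_closedBall (0 : E) ρ).lipschitzOnWith_of_nnnorm_fderiv_le (𝕜 := 𝕜)
    (fun z hz ↦ ?_) fun z hz ↦ ?_
  · have hz' : z ∈ ball (0 : E) R := closedBall_subset_ball hρR hz
    exact (hg.differentiableOn one_ne_zero z hz').differentiableAt (isOpen_ball.mem_nhds hz')
  · exact (Real.le_toNNReal_iff_coe_le ((norm_nonneg _).trans (hC z hz))).mpr (hC z hz)

theorem existsUnique_mem_ball_add_eq_zero [NormedSpace ℝ E] [NormedSpace ℝ F] [ProperSpace E]
    {f g : E → F} {R r N : ℝ} (hr : 0 < r) (hrR : r ≤ R) (hN : 0 < N)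
    (hf : ContDiffOn 𝕜 1 f (closedBall 0 R)) (hg : ContDiffOn 𝕜 1 g (closedBall 0 R))
    (hinj : InjOn f (closedBall 0 R)) (hf0 : f 0 = 0)
    (hJ : ∀ z ∈ closedBall (0 : E) R, ∃ J : E ≃L[𝕜] F,
      (J : E →L[𝕜] F) = fderiv 𝕜 f z ∧ ‖(J.symm : F →L[𝕜] E)‖ ≤ N)
    (hdg : ∀ z ∈ closedBall (0 : E) R, ‖fderiv 𝕜 g z‖ * N ≤ 1 / 2)
    (hgs : ∀ z ∈ closedBall (0 : E) R, ‖g z‖ * N ≤ r / 2) :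
    ∃! z, z ∈ ball (0 : E) r ∧ f z + g z = 0 := by
  obtain ⟨K, hNK, hK2N⟩ : ∃ K, N < K ∧ K < 2 * N := ⟨3 * N / 2, by linarith, by linarith⟩
  have hK : 0 < K := hN.trans hNK
  obtain ⟨σ, hσ⟩ : ∃ σ, 2 * N * σ = r := ⟨r / (2 * N), by field_simp⟩
  have hσ0 : 0 < σ := pos_of_mul_pos_right (hσ ▸ hr) (by positivity)
  have hKσ : K * σ < r := hσ ▸ by gcongr
  have hKσR : closedBall (0 : E) (K * σ) ⊆ closedBall 0 R :=
    closedBall_subset_closedBall (hKσ.le.trans hrR)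
  obtain ⟨δ, hδ, hKσδ, hloc⟩ := isLocallySolvableOn_of_norm_fderiv_symm_le (hKσ.trans_le hrR)
    (hf.mono ball_subset_closedBall) (fun z hz ↦ hJ z (ball_subset_closedBall hz)) hN hNK
  obtain ⟨Φ, hfΦ, hΦ, hΦlip⟩ := hloc.exists_lipschitzOnWith_rightInverse hK hδ hf0
    (hinj.mono (closedBall_subset_closedBall hKσδ))
  have hg_mem : MapsTo (-g) (closedBall 0 R) (closedBall 0 σ) := fun z hz ↦ by
    rw [mem_closedBall_zero_iff, Pi.neg_apply, norm_neg]
    exact le_of_mul_le_mul_right (by linarith [hgs z hz]) hN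
  have hglip : LipschitzOnWith (Real.toNNReal (2 * N)⁻¹) (-g) (closedBall 0 (K * σ)) := by
    refine (lipschitzOnWith_closedBall_of_norm_fderiv_le (hg.mono ball_subset_closedBall)
      (hKσ.trans_le hrR) fun z hz ↦ ?_).neg
    rw [← one_div, le_div_iff₀ (by positivity)]
    linarith [hdg z (hKσR hz)]
  have hq : Real.toNNReal K * Real.toNNReal (2 * N)⁻¹ < 1 := by
    rw [← Real.toNNReal_mul hK.le, Real.toNNReal_lt_one, ← div_eq_mul_inv,
      div_lt_one (by positivity)]
    exact hK2N
  obtain ⟨z, ⟨hz, hTz⟩, huniq⟩ := existsUnique_isFixedPt_of_lipschitzOnWith hq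
    isClosed_closedBall.isComplete ⟨0, mem_closedBall_self (by positivity)⟩
    (hΦ.comp (hg_mem.mono_left hKσR)) (hΦlip.comp hglip (hg_mem.mono_left hKσR))
  have hzero : ∀ z ∈ closedBall 0 R, f z + g z = 0 ↔ Φ (-g z) = z := fun z hz ↦
    add_eq_zero_iff_of_rightInverse hfΦ (hΦ.mono_right hKσR) hinj hz (hg_mem hz)
  refine ⟨z, ⟨closedBall_subset_ball hKσ hz, (hzero z (hKσR hz)).mpr hTz⟩, ?_⟩
  rintro y ⟨hy, hFy⟩
  have hyR : y ∈ closedBall 0 R := ball_subset_closedBall (ball_subset_ball hrR hy)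
  have hTy := (hzero y hyR).mp hFy
  exact huniq y ⟨hTy ▸ hΦ (hg_mem hyR), hTy⟩

end

theorem stmt_8_general {n : ℕ} (f g : EuclideanSpace ℂ (Fin n) → EuclideanSpace ℂ (Fin n))
    (R r N : ℝ) (hr : 0 < r) (hrR : r ≤ R)
    (hf1 : ContDiffOn ℂ 1 f (closedBall 0 R))
    (hg1 : ContDiffOn ℂ 1 g (closedBall 0 R))
    (hinj : Set.InjOn f (closedBall 0 R))
    (hf0 : f 0 = 0)
    (hJ : ∀ z ∈ closedBall (0 : EuclideanSpace ℂ (Fin n)) R,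
      ∃ J : EuclideanSpace ℂ (Fin n) ≃L[ℂ] EuclideanSpace ℂ (Fin n),
        (J : EuclideanSpace ℂ (Fin n) →L[ℂ] EuclideanSpace ℂ (Fin n)) = fderiv ℂ f z ∧
        ‖(J.symm : EuclideanSpace ℂ (Fin n) →L[ℂ] EuclideanSpace ℂ (Fin n))‖ ≤ N)
    (hdg : ∀ z ∈ closedBall (0 : EuclideanSpace ℂ (Fin n)) R, ‖fderiv ℂ g z‖ * N ≤ 1 / 2)
    (hgs : ∀ z ∈ closedBall (0 : EuclideanSpace ℂ (Fin n)) R, ‖g z‖ * N ≤ r / 2) :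
    ∃! z₀ : EuclideanSpace ℂ (Fin n), z₀ ∈ ball (0 : EuclideanSpace ℂ (Fin n)) r ∧
      f z₀ + g z₀ = 0 := by
  rcases subsingleton_or_nontrivial (EuclideanSpace ℂ (Fin n)) with _ | _
  · exact ⟨0, ⟨mem_ball_self hr, Subsingleton.elim _ _⟩, fun z _ ↦ Subsingleton.elim _ _⟩
  obtain ⟨J, -, hJN⟩ := hJ 0 (mem_closedBall_self (hr.le.trans hrR))
  exact existsUnique_mem_ball_add_eq_zero hr hrR (J.norm_symm_pos.trans_le hJN) hf1 hg1 hinj hf0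
    hJ hdg hgs

theorem stmt_8 {n : ℕ} (f g : EuclideanSpace ℂ (Fin n) → EuclideanSpace ℂ (Fin n))
    (R r N : ℝ) (hR : 0 < R) (hr : 0 < r) (hrR : r ≤ R) (hN : 0 ≤ N)
    (hf1 : ContDiffOn ℂ 1 f (closedBall 0 R))
    (hg1 : ContDiffOn ℂ 1 g (closedBall 0 R))
    (hinj : Set.InjOn f (closedBall 0 R))
    (hf0 : f 0 = 0)
    (hJ : ∀ z ∈ closedBall (0 : EuclideanSpace ℂ (Fin n)) R,
      ∃ J : EuclideanSpace ℂ (Fin n) ≃L[ℂ] EuclideanSpace ℂ (Fin n),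
        (J : EuclideanSpace ℂ (Fin n) →L[ℂ] EuclideanSpace ℂ (Fin n)) = fderiv ℂ f z ∧
        ‖(J.symm : EuclideanSpace ℂ (Fin n) →L[ℂ] EuclideanSpace ℂ (Fin n))‖ ≤ N)
    (hdg : ∀ z ∈ closedBall (0 : EuclideanSpace ℂ (Fin n)) R, ‖fderiv ℂ g z‖ * N ≤ 1 / 2)
    (hgs : ∀ z ∈ closedBall (0 : EuclideanSpace ℂ (Fin n)) R, ‖g z‖ * N ≤ r / 2) :
    ∃! z₀ : EuclideanSpace ℂ (Fin n), z₀ ∈ ball (0 : EuclideanSpace ℂ (Fin n)) r ∧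
      f z₀ + g z₀ = 0 :=
  stmt_8_general f g R r N hr hrR hf1 hg1 hinj hf0 hJ hdg hgs
end

section
/- Let D, A₀, A₁, …, A_N be square complex n×n matrices with D invertible, and ‖·‖ a submultiplicative matrix norm. If ‖D(A_i − Id)‖ ≤ ε_i for i = 0, …, N, then ‖D(A₀A₁⋯A_N − Id)‖ ≤ ε₀ + (1 + ε₀‖D^{−1}‖)ε₁ + ⋯ + (1 + ε₀‖D^{−1}‖)⋯(1 + ε_{N−1}‖D^{−1}‖)ε_N. -/
/-! Since `D⁻¹ D = 1`, for `P = A₁ ⋯ A_N` one has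
`D (A₀ P - 1) = D (A₀ - 1) + D (A₀ - 1) D⁻¹ · D (P - 1) + D (P - 1)`, so
`ν (D (A₀ P - 1)) ≤ ε₀ + (1 + ε₀ ν D⁻¹) ν (D (P - 1))`, and the bound follows by induction on `N`. -/

open Finset

theorem Fin.Iio_zero {m : ℕ} : Iio (0 : Fin (m + 1)) = ∅ := Iio_bot

theorem Fin.prod_Iio_succ {M : Type*} [CommMonoid M] {m : ℕ} (f : Fin (m + 1) → M) (i : Fin m) :
    ∏ j ∈ Iio i.succ, f j = f 0 * ∏ j ∈ Iio i, f j.succ := by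
  rw [← Ico_bot, bot_eq_zero, ← Ioo_insert_left (Fin.succ_pos i), prod_insert (by simp),
    ← Fin.map_succEmb_Iio, prod_map]
  rfl

theorem Fin.sum_prod_Iio_mul_eq_add_mul {R : Type*} [CommSemiring R] {m : ℕ}
    (f g : Fin (m + 2) → R) :
    ∑ i, (∏ j ∈ Iio i, f j) * g i =
      g 0 + f 0 * ∑ i : Fin (m + 1), (∏ j ∈ Iio i, f j.succ) * g i.succ := by
  rw [Fin.sum_univ_succ, mul_sum]
  simp [Fin.prod_Iio_succ, Fin.Iio_zero, mul_assoc]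

section

variable {R : Type*} [Ring R]

theorem mul_mul_sub_one_eq {D D' : R} (hD : D' * D = 1) (a b : R) :
    D * (a * b - 1) = D * (a - 1) + D * (a - 1) * D' * (D * (b - 1)) + D * (b - 1) := by
  rw [mul_assoc _ D', ← mul_assoc D', hD, one_mul]
  noncomm_ring

theorem le_mul_mul_sub_one {ν : R → ℝ} (hν0 : ∀ a, 0 ≤ ν a) (hνadd : ∀ a b, ν (a + b) ≤ ν a + ν b)
    (hνmul : ∀ a b, ν (a * b) ≤ ν a * ν b) {D D' : R} (hD : D' * D = 1) {a b : R} {ε δ : ℝ}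
    (ha : ν (D * (a - 1)) ≤ ε) (hb : ν (D * (b - 1)) ≤ δ) :
    ν (D * (a * b - 1)) ≤ ε + (1 + ε * ν D') * δ := by
  have hε : 0 ≤ ε := (hν0 _).trans ha
  rw [mul_mul_sub_one_eq hD]
  calc _ ≤ ν (D * (a - 1)) + ν (D * (a - 1) * D') * ν (D * (b - 1)) + ν (D * (b - 1)) :=
        (hνadd _ _).trans (add_le_add_left ((hνadd _ _).trans (add_le_add_right (hνmul _ _) _)) _)
    _ ≤ ε + ε * ν D' * δ + δ := by
        have hmid : ν (D * (a - 1) * D') ≤ ε * ν D' :=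
          (hνmul _ _).trans (mul_le_mul_of_nonneg_right ha (hν0 _))
        exact add_le_add (add_le_add ha (mul_le_mul hmid hb (hν0 _) (mul_nonneg hε (hν0 _)))) hb
    _ = ε + (1 + ε * ν D') * δ := by ring

theorem le_ofFn_prod_sub_one {ν : R → ℝ} (hν0 : ∀ a, 0 ≤ ν a)
    (hνadd : ∀ a b, ν (a + b) ≤ ν a + ν b) (hνmul : ∀ a b, ν (a * b) ≤ ν a * ν b)
    {D D' : R} (hD : D' * D = 1) :
    ∀ {N : ℕ} (A : Fin (N + 1) → R) (ε : Fin (N + 1) → ℝ), (∀ i, ν (D * (A i - 1)) ≤ ε i) →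
      ν (D * ((List.ofFn A).prod - 1)) ≤ ∑ i, (∏ j ∈ Iio i, (1 + ε j * ν D')) * ε i
  | 0, A, ε, hA => by simpa [Fin.Iio_zero] using hA 0
  | N + 1, A, ε, hA => by
    rw [List.ofFn_succ, List.prod_cons, Fin.sum_prod_Iio_mul_eq_add_mul]
    exact le_mul_mul_sub_one hν0 hνadd hνmul hD (hA 0)
      (le_ofFn_prod_sub_one hν0 hνadd hνmul hD _ _ fun i ↦ hA i.succ)

end

theorem stmt_9 (n N : ℕ) (ν : Matrix (Fin n) (Fin n) ℂ → ℝ)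
    (hν0 : ∀ A, 0 ≤ ν A)
    (hνadd : ∀ A B, ν (A + B) ≤ ν A + ν B)
    (hνmul : ∀ A B, ν (A * B) ≤ ν A * ν B)
    (D : Matrix (Fin n) (Fin n) ℂ) (hD : IsUnit D.det)
    (A : Fin (N + 1) → Matrix (Fin n) (Fin n) ℂ)
    (ε : Fin (N + 1) → ℝ)
    (hA : ∀ i, ν (D * (A i - 1)) ≤ ε i) :
    ν (D * ((List.ofFn A).prod - 1))
      ≤ ∑ i : Fin (N + 1), (∏ j ∈ Finset.Iio i, (1 + ε j * ν D⁻¹)) * ε i :=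
  le_ofFn_prod_sub_one hν0 hνadd hνmul (D.nonsing_inv_mul hD) A ε hA
end

section
/- Let Λ₁, …, Λ_N > 0, set L_j := Σ_{k≤j} Λ_k, and define for the (N−1)-dimensional vector p the linear operator 𝔏 : ℝ^{N−1} → ℝ^N by (𝔏p)₁ = c₁p₁ + Σ_{2≤j≤N−1} c̃_j p_j, (𝔏p)_i = c_i p_{i−1} + Σ_{i≤j≤N−1} c̃_j p_j for 2 ≤ i ≤ N−1, (𝔏p)_N = c_N p_{N−1}, where c₁ = −√(Λ₂/(Λ₁L₂)), c_j = √(L_{j−1}/(L_jΛ_j)) for 2 ≤ j ≤ N, and c̃_j = −√(Λ_{j+1}/(L_{j+1}L_j)) for 2 ≤ j ≤ N−1. Let ℓ be the N×(N−1) matrix of 𝔏 and 𝓛 := ℓℓᵀ (with entries ℓ_i·ℓ_j). Then 𝓛 = 𝓛₀ − E/L_N, where 𝓛₀ = diag(1/Λ₁, …, 1/Λ_N) and E is the N×N matrix all of whose entries equal 1. -/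
noncomputable def Lsum (Λ : ℕ → ℝ) (j : ℕ) : ℝ := ∑ k ∈ Finset.Icc 1 j, Λ k

noncomputable def ccoef (Λ : ℕ → ℝ) (j : ℕ) : ℝ :=
  if j = 1 then -Real.sqrt (Λ 2 / (Λ 1 * Lsum Λ 2))
  else Real.sqrt (Lsum Λ (j - 1) / (Lsum Λ j * Λ j))

noncomputable def ctcoef (Λ : ℕ → ℝ) (j : ℕ) : ℝ :=
  if j = 1 then ccoef Λ 1
  else -Real.sqrt (Λ (j + 1) / (Lsum Λ (j + 1) * Lsum Λ j))

/-- The `N × (N-1)` matrix `ℓ` of the linear operator `𝔏`, with `1`-based indices. -/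
noncomputable def ellMat (Λ : ℕ → ℝ) (i k : ℕ) : ℝ :=
  if k + 1 = i then ccoef Λ i else if i ≤ k then ctcoef Λ k else 0

lemma Lsum_succ (Λ : ℕ → ℝ) (j : ℕ) : Lsum Λ (j+1) = Lsum Λ j + Λ (j+1) := by
  unfold Lsum
  rw [Finset.sum_Icc_succ_top (by omega)]

lemma Lsum_one (Λ : ℕ → ℝ) : Lsum Λ 1 = Λ 1 := by simp [Lsum]

lemma Lsum_pos {N : ℕ} {Λ : ℕ → ℝ} (hΛ : ∀ i, 1 ≤ i → i ≤ N → 0 < Λ i)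
    {j : ℕ} (h1 : 1 ≤ j) (hjN : j ≤ N) : 0 < Lsum Λ j := by
  apply Finset.sum_pos
  · intro k hk
    simp only [Finset.mem_Icc] at hk
    exact hΛ k hk.1 (le_trans hk.2 hjN)
  · exact ⟨1, by simp [Finset.mem_Icc]; omega⟩

lemma tele (f : ℕ → ℝ) : ∀ n m, m ≤ n →
    ∑ k ∈ Finset.Ico m n, (f k - f (k+1)) = f m - f n := by
  intro n
  induction n with
  | zero => intro m hm; rw [Nat.le_zero] at hm; subst hm; simp
  | succ n ih =>
    intro m hm
    rcases Nat.lt_or_ge m (n+1) with h | h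
    · rw [Finset.sum_Ico_succ_top (by omega), ih m (by omega)]; ring
    · have : m = n + 1 := by omega
      subst this; simp

lemma ct_sq {N : ℕ} {Λ : ℕ → ℝ} (hΛ : ∀ i, 1 ≤ i → i ≤ N → 0 < Λ i)
    {k : ℕ} (h1 : 1 ≤ k) (hk : k + 1 ≤ N) :
    ctcoef Λ k ^ 2 = 1 / Lsum Λ k - 1 / Lsum Λ (k+1) := by
  have hLk := Lsum_pos hΛ h1 (by omega)
  have hLk1 := Lsum_pos hΛ (by omega : 1 ≤ k+1) hk
  have hΛk1 := hΛ (k+1) (by omega) hk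
  rcases eq_or_lt_of_le h1 with h | h
  · -- k = 1
    have hk1 : k = 1 := h.symm
    subst hk1
    have hΛ1 := hΛ 1 le_rfl (by omega)
    rw [ctcoef, if_pos rfl, ccoef, if_pos rfl]
    rw [neg_pow, Real.sq_sqrt (by positivity)]
    rw [Lsum_one] at hLk ⊢
    have h2 : Lsum Λ 2 = Λ 1 + Λ 2 := by
      have := Lsum_succ Λ 1; rw [Lsum_one] at this; exact this
    rw [h2] at hLk1 ⊢
    field_simp
    all_goals first | (left; ring) | ring | tauto
  · -- k ≥ 2
    rw [ctcoef, if_neg (by omega)]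
    rw [neg_pow, Real.sq_sqrt (by positivity)]
    have hs : Lsum Λ (k+1) = Lsum Λ k + Λ (k+1) := Lsum_succ Λ k
    rw [hs] at hLk1 ⊢
    field_simp
    all_goals first | (left; ring) | ring | tauto

lemma c_sq {N : ℕ} {Λ : ℕ → ℝ} (hΛ : ∀ i, 1 ≤ i → i ≤ N → 0 < Λ i)
    {j : ℕ} (h2 : 2 ≤ j) (hj : j ≤ N) :
    ccoef Λ j ^ 2 = 1 / Λ j - 1 / Lsum Λ j := by
  obtain ⟨m, rfl⟩ := Nat.exists_eq_add_of_le h2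
  have hΛj := hΛ (2+m) (by omega) hj
  have hLm := Lsum_pos hΛ (by omega : 1 ≤ 1 + m) (by omega)
  have hLj := Lsum_pos hΛ (by omega : 1 ≤ 2 + m) hj
  rw [ccoef, if_neg (by omega)]
  have h1 : (2 + m) - 1 = 1 + m := by omega
  rw [h1, Real.sq_sqrt (by positivity)]
  have hs : Lsum Λ (2+m) = Lsum Λ (1+m) + Λ (2+m) := by
    have := Lsum_succ Λ (1+m)
    rwa [show 1 + m + 1 = 2 + m from by omega] at this
  rw [hs] at hLj ⊢
  field_simp
  all_goals first | (left; ring) | ring | tauto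

lemma c_ct {N : ℕ} {Λ : ℕ → ℝ} (hΛ : ∀ i, 1 ≤ i → i ≤ N → 0 < Λ i)
    {j : ℕ} (h2 : 2 ≤ j) (hj : j ≤ N) :
    ccoef Λ j * ctcoef Λ (j-1) = -(1 / Lsum Λ j) := by
  have hΛj := hΛ j (by omega) hj
  have hLj := Lsum_pos hΛ (by omega : 1 ≤ j) hj
  have hLjm := Lsum_pos hΛ (by omega : 1 ≤ j - 1) (by omega)
  rcases eq_or_lt_of_le h2 with h | h
  · -- j = 2
    subst h
    have hΛ1 := hΛ 1 le_rfl (by omega)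
    have hΛ2 := hΛ 2 (by omega) hj
    rw [ccoef, if_neg (by omega), ctcoef, if_pos rfl, ccoef, if_pos rfl]
    rw [mul_neg, ← Real.sqrt_mul (by positivity)]
    have h21 : (2:ℕ) - 1 = 1 := rfl
    rw [h21, Lsum_one]
    have h2 : Lsum Λ 2 = Λ 1 + Λ 2 := by
      have := Lsum_succ Λ 1; rw [Lsum_one] at this; exact this
    rw [Lsum_one] at hLjm
    rw [h2] at hLj ⊢
    have : Λ 1 / ((Λ 1 + Λ 2) * Λ 2) * (Λ 2 / (Λ 1 * (Λ 1 + Λ 2)))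
        = (1 / (Λ 1 + Λ 2))^2 := by field_simp
    rw [this, Real.sqrt_sq (by positivity)]
  · -- j ≥ 3
    rw [ccoef, if_neg (by omega), ctcoef, if_neg (by omega)]
    rw [show j - 1 + 1 = j from by omega]
    rw [mul_neg, ← Real.sqrt_mul (by positivity)]
    have : Lsum Λ (j-1) / (Lsum Λ j * Λ j) * (Λ j / (Lsum Λ j * Lsum Λ (j-1)))
        = (1 / Lsum Λ j)^2 := by field_simp
    rw [this, Real.sqrt_sq (by positivity)]

lemma sum_ct {N : ℕ} {Λ : ℕ → ℝ} (hΛ : ∀ i, 1 ≤ i → i ≤ N → 0 < Λ i)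
    {m : ℕ} (h1 : 1 ≤ m) (hm : m ≤ N) :
    ∑ k ∈ Finset.Icc m (N-1), ctcoef Λ k ^ 2 = 1 / Lsum Λ m - 1 / Lsum Λ N := by
  have hIcc : Finset.Icc m (N-1) = Finset.Ico m N := by
    ext x; simp [Finset.mem_Icc, Finset.mem_Ico]; omega
  rw [hIcc]
  rw [Finset.sum_congr rfl (fun k hk => by
    simp only [Finset.mem_Ico] at hk
    exact ct_sq hΛ (by omega) (by omega))]
  exact tele _ N m hm

lemma key {N : ℕ} (hN : 2 ≤ N) {Λ : ℕ → ℝ}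
    (hΛ : ∀ i, 1 ≤ i → i ≤ N → 0 < Λ i)
    {i j : ℕ} (hi1 : 1 ≤ i) (hiN : i ≤ N) (hj1 : 1 ≤ j) (hjN : j ≤ N) (hij : i ≤ j) :
    ∑ k ∈ Finset.Icc 1 (N - 1), ellMat Λ i k * ellMat Λ j k
      = (if i = j then 1 / Λ i else 0) - 1 / Lsum Λ N := by
  rcases eq_or_lt_of_le hj1 with h | h2j
  · -- j = 1, hence i = 1
    subst h
    have hi : i = 1 := by omega
    subst hi
    rw [if_pos rfl]
    have hco : ∀ k ∈ Finset.Icc 1 (N-1), ellMat Λ 1 k * ellMat Λ 1 k = ctcoef Λ k ^ 2 := by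
      intro k hk; simp only [Finset.mem_Icc] at hk
      rw [ellMat, if_neg (by omega), if_pos (by omega)]; ring
    rw [Finset.sum_congr rfl hco, sum_ct hΛ le_rfl (by omega), Lsum_one]
  · -- 2 ≤ j
    have h2 : 2 ≤ j := h2j
    have hrestrict : ∑ k ∈ Finset.Icc 1 (N-1), ellMat Λ i k * ellMat Λ j k
        = ∑ k ∈ Finset.Icc (j-1) (N-1), ellMat Λ i k * ellMat Λ j k := by
      symm
      apply Finset.sum_subset
      · intro x hx; simp only [Finset.mem_Icc] at *; omega
      · intro x hx hnx
        simp only [Finset.mem_Icc] at hx hnx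
        have hz : ellMat Λ j x = 0 := by
          rw [ellMat, if_neg (by omega), if_neg (by omega)]
        rw [hz, mul_zero]
    rw [hrestrict]
    have hins : Finset.Icc (j-1) (N-1) = insert (j-1) (Finset.Icc j (N-1)) := by
      ext x; simp only [Finset.mem_Icc, Finset.mem_insert]; omega
    rw [hins, Finset.sum_insert (by simp only [Finset.mem_Icc]; omega)]
    have hEj : ellMat Λ j (j-1) = ccoef Λ j := by
      rw [ellMat, if_pos (by omega)]
    have hco : ∀ k ∈ Finset.Icc j (N-1), ellMat Λ i k * ellMat Λ j k = ctcoef Λ k ^ 2 := by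
      intro k hk; simp only [Finset.mem_Icc] at hk
      have e1 : ellMat Λ i k = ctcoef Λ k := by
        rw [ellMat, if_neg (by omega), if_pos (by omega)]
      have e2 : ellMat Λ j k = ctcoef Λ k := by
        rw [ellMat, if_neg (by omega), if_pos (by omega)]
      rw [e1, e2]; ring
    rw [Finset.sum_congr rfl hco, sum_ct hΛ (by omega) hjN]
    rcases eq_or_lt_of_le hij with he | hlt
    · subst he
      rw [if_pos rfl, hEj]
      have hsq : ccoef Λ i * ccoef Λ i = 1 / Λ i - 1 / Lsum Λ i := by
        rw [← sq]; exact c_sq hΛ h2 hjN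
      rw [hsq]; ring
    · have hEi : ellMat Λ i (j-1) = ctcoef Λ (j-1) := by
        rw [ellMat, if_neg (by omega), if_pos (by omega)]
      rw [if_neg (by omega), hEi, hEj, mul_comm, c_ct hΛ h2 hjN]
      ring

theorem stmt_13 (N : ℕ) (hN : 2 ≤ N) (Λ : ℕ → ℝ)
    (hΛ : ∀ i, 1 ≤ i → i ≤ N → 0 < Λ i)
    (i j : ℕ) (hi1 : 1 ≤ i) (hiN : i ≤ N) (hj1 : 1 ≤ j) (hjN : j ≤ N) :
    ∑ k ∈ Finset.Icc 1 (N - 1), ellMat Λ i k * ellMat Λ j k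
      = (if i = j then 1 / Λ i else 0) - 1 / Lsum Λ N := by
  rcases le_total i j with h | h
  · exact key hN hΛ hi1 hiN hj1 hjN h
  · rw [Finset.sum_congr rfl (fun k _ => mul_comm (ellMat Λ i k) (ellMat Λ j k))]
    rw [key hN hΛ hj1 hjN hi1 hiN h]
    by_cases he : i = j
    · subst he; simp
    · rw [if_neg he, if_neg (fun hh => he hh.symm)]
end

section
/- Let ρ = R_z(κ) R_x(ī) R_z(−κ) where R_z(κ) and R_x(ī) are the standard rotations about the z- and x-axes. If κ = arg(p, −q) (so cos κ = p/√(p²+q²), sin κ = −q/√(p²+q²)) and 𝔠 := (1 − cos ī)/(p²+q²), 𝔰 := sin ī/√(p²+q²), then ρ equals the matrix [[1 − q²𝔠, −pq𝔠, −q𝔰], [−pq𝔠, 1 − p²𝔠, −p𝔰], [q𝔰, p𝔰, 1 − (p²+q²)𝔠]]. In particular ρ is a polynomial in (p, q, 𝔠, 𝔰), hence extends real-analytically through (p,q) = (0,0) whenever 𝔠 and 𝔰 do. -/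
/-- Rotation about the x-axis. -/
noncomputable def Rx (α : ℝ) : Matrix (Fin 3) (Fin 3) ℝ :=
  !![1, 0, 0;
     0, Real.cos α, -Real.sin α;
     0, Real.sin α, Real.cos α]

/-- Rotation about the z-axis. -/
noncomputable def Rz (α : ℝ) : Matrix (Fin 3) (Fin 3) ℝ :=
  !![Real.cos α, -Real.sin α, 0;
     Real.sin α, Real.cos α, 0;
     0, 0, 1]

open Real

/- The rotation by `ι` about the axis `(cos κ, sin κ, 0)`; `cos² κ + sin² κ = 1` puts the
diagonal in the form `1 - (…) (1 - cos ι)` of the target matrix. -/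
theorem Rz_mul_Rx_mul_Rz_neg (κ ι : ℝ) :
    Rz κ * Rx ι * Rz (-κ) =
      !![1 - sin κ ^ 2 * (1 - cos ι), sin κ * cos κ * (1 - cos ι), sin κ * sin ι;
         sin κ * cos κ * (1 - cos ι), 1 - cos κ ^ 2 * (1 - cos ι), -(cos κ * sin ι);
         -(sin κ * sin ι), cos κ * sin ι, cos ι] := by
  ext i j
  fin_cases i <;> fin_cases j <;>
    simp [Rz, Rx, Matrix.mul_apply, Fin.sum_univ_succ] <;>
    first | ring1 | linear_combination sin_sq_add_cos_sq κ

theorem stmt_16_general (p q ibar κ : ℝ) (hpq : (p, q) ≠ (0, 0))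
    (hcos : Real.cos κ = p / Real.sqrt (p ^ 2 + q ^ 2))
    (hsin : Real.sin κ = -q / Real.sqrt (p ^ 2 + q ^ 2)) :
    Rz κ * Rx ibar * Rz (-κ) =
      !![1 - q ^ 2 * ((1 - Real.cos ibar) / (p ^ 2 + q ^ 2)),
           -(p * q * ((1 - Real.cos ibar) / (p ^ 2 + q ^ 2))),
           -(q * (Real.sin ibar / Real.sqrt (p ^ 2 + q ^ 2)));
         -(p * q * ((1 - Real.cos ibar) / (p ^ 2 + q ^ 2))),
           1 - p ^ 2 * ((1 - Real.cos ibar) / (p ^ 2 + q ^ 2)),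
           -(p * (Real.sin ibar / Real.sqrt (p ^ 2 + q ^ 2)));
         q * (Real.sin ibar / Real.sqrt (p ^ 2 + q ^ 2)),
           p * (Real.sin ibar / Real.sqrt (p ^ 2 + q ^ 2)),
           1 - (p ^ 2 + q ^ 2) * ((1 - Real.cos ibar) / (p ^ 2 + q ^ 2))] := by
  have hr : 0 < p ^ 2 + q ^ 2 := by
    rcases not_and_or.mp (by simpa [Prod.ext_iff] using hpq) with h | h <;> positivity
  have hsq : √(p ^ 2 + q ^ 2) ^ 2 = p ^ 2 + q ^ 2 := sq_sqrt hr.le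
  rw [Rz_mul_Rx_mul_Rz_neg, hcos, hsin, div_pow, div_pow, neg_sq, hsq]
  ext i j
  fin_cases i <;> fin_cases j <;> simp <;> field_simp <;>
    first | ring1 | rw [hsq]

theorem stmt_16 (p q ibar κ : ℝ) (hpq : (p, q) ≠ (0, 0))
    (hibar : ibar ∈ Set.Ioo 0 Real.pi)
    (hcos : Real.cos κ = p / Real.sqrt (p ^ 2 + q ^ 2))
    (hsin : Real.sin κ = -q / Real.sqrt (p ^ 2 + q ^ 2)) :
    Rz κ * Rx ibar * Rz (-κ) =
      !![1 - q ^ 2 * ((1 - Real.cos ibar) / (p ^ 2 + q ^ 2)),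
           -(p * q * ((1 - Real.cos ibar) / (p ^ 2 + q ^ 2))),
           -(q * (Real.sin ibar / Real.sqrt (p ^ 2 + q ^ 2)));
         -(p * q * ((1 - Real.cos ibar) / (p ^ 2 + q ^ 2))),
           1 - p ^ 2 * ((1 - Real.cos ibar) / (p ^ 2 + q ^ 2)),
           -(p * (Real.sin ibar / Real.sqrt (p ^ 2 + q ^ 2)));
         q * (Real.sin ibar / Real.sqrt (p ^ 2 + q ^ 2)),
           p * (Real.sin ibar / Real.sqrt (p ^ 2 + q ^ 2)),
           1 - (p ^ 2 + q ^ 2) * ((1 - Real.cos ibar) / (p ^ 2 + q ^ 2))] :=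
  stmt_16_general p q ibar κ hpq hcos hsin
end
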